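/- arXiv:2204.00508 — 6 statements merged into one kernel-verified Lean document; each statement's English description precedes it below -/
import Mathlib

section
/- Let V be a complete discrete valuation ring with uniformiser π, let M be a torsionfree V-module, let T ⊆ M be a V-submodule, and let S ⊆ T be a V-submodule. Then S is compactoid relative to T if and only if there exists a π-adic null sequence (t_k)_{k∈ℕ} in T such that S ⊆ (Σ_{k∈ℕ} V·t_k) + π^n T for every n ∈ ℕ. (Proposition 3.4, equivalence of characterisations (1) and (3) of compactoid subsets.) -/
open Pointwise

/-- `S` is compactoid relative to `T`: for every `n` there is a finite subset
`Fₙ ⊆ T` with `S ⊆ V·Fₙ + πⁿ T`. -/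
def CompactoidRel {V : Type*} [CommRing V] (π : V) {M : Type*} [AddCommGroup M]
    [Module V M] (S T : Submodule V M) : Prop :=
  ∀ n : ℕ, ∃ F : Finset M, (F : Set M) ⊆ (T : Set M) ∧
    S ≤ Submodule.span V (F : Set M) ⊔ π ^ n • T

/-!
Over a noetherian ring the finite sets witnessing compactoidness can be taken inside `S`, since
the image of `S` in `M ⧸ πⁿ T` lies in a finitely generated module. If `Fₙ ⊆ S` is such a set
at level `n`, each element of `Fₙ₊₁` differs from an element of `span Fₙ` by an element of
`πⁿ T`. These differences, together with `F₀`, form a sequence of finite sets tending to `0`;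
enumerating them gives a null sequence whose span contains every `Fₙ`. Conversely, modulo `πⁿ T`
a null sequence has only finitely many nonzero terms.
-/

open Filter Set Submodule

theorem exists_seq_enumerating_of_eventually_subset {ι M : Type*} [Zero M] {U : ι → Set M}
    (hU : ∀ i, (0 : M) ∈ U i) (G : ℕ → Finset M) (hG : ∀ i, ∀ᶠ m in atTop, ↑(G m) ⊆ U i) :
    ∃ t : ℕ → M, range t ⊆ insert 0 (⋃ m, ↑(G m)) ∧ (∀ m, ↑(G m) ⊆ range t) ∧
      ∀ i, ∀ᶠ k in atTop, t k ∈ U i := by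
  obtain ⟨e, he⟩ := exists_injective_nat (Σ m, G m)
  set t : ℕ → M := Function.extend e (fun σ => (σ.2 : M)) 0
  have ht_e (σ : Σ m, G m) : t (e σ) = σ.2 := he.extend_apply _ _ σ
  have ht_zero {k : ℕ} (hk : ¬∃ σ, e σ = k) : t k = 0 := Function.extend_apply' _ _ _ hk
  refine ⟨t, ?_, fun m x hx => ⟨e ⟨m, ⟨x, hx⟩⟩, ht_e _⟩, fun i => ?_⟩
  · rintro _ ⟨k, rfl⟩
    by_cases hk : ∃ σ, e σ = k
    · obtain ⟨σ, rfl⟩ := hk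
      exact .inr (mem_iUnion.2 ⟨σ.1, by simp [ht_e]⟩)
    · exact .inl (ht_zero hk)
  obtain ⟨m₀, hm₀⟩ := eventually_atTop.1 (hG i)
  -- only the finitely many positions `e σ` with `σ.1 < m₀` can carry a term outside `U i`
  have hlow : {σ : Σ m, G m | σ.1 < m₀}.Finite :=
    (finite_Iio m₀).preimage' fun m _ =>
      (finite_range (Sigma.mk m)).subset fun | ⟨_, x⟩, rfl => ⟨x, rfl⟩
  rw [← Nat.cofinite_eq_atTop]
  refine (hlow.image e).subset fun k hk => ?_
  by_cases hke : ∃ σ, e σ = k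
  · obtain ⟨σ, rfl⟩ := hke
    refine ⟨σ, show σ.1 < m₀ from not_le.1 fun h => hk ?_, rfl⟩
    simpa only [mem_ofPred_eq, ht_e] using hm₀ σ.1 h σ.2.2
  · exact absurd (show t k ∈ U i from ht_zero hke ▸ hU i) hk

namespace Submodule

variable {R M : Type*} [CommRing R] [AddCommGroup M] [Module R M]

theorem antitone_pow_smul (a : R) (T : Submodule R M) : Antitone fun n : ℕ => a ^ n • T := by
  intro n m h
  obtain ⟨k, rfl⟩ := Nat.exists_eq_add_of_le h
  simp only [pow_add, mul_comm (a ^ n), mul_smul]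
  exact smul_le_self_of_tower (a ^ k) (a ^ n • T)

theorem exists_finset_subset_le_span_sup [IsNoetherianRing R] {S P : Submodule R M}
    (F : Finset M) (h : S ≤ span R ↑F ⊔ P) :
    ∃ F' : Finset M, ↑F' ⊆ (S : Set M) ∧ S ≤ span R ↑F' ⊔ P := by
  have hmap : S.map P.mkQ ≤ (span R ↑F).map P.mkQ := by
    simpa only [map_sup, mkQ_map_self, sup_bot_eq] using map_mono (f := P.mkQ) h
  obtain ⟨G₀, hG₀fin, hG₀⟩ := fg_def.1 (((fg_span F.finite_toSet).map P.mkQ).of_le hmap)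
  have hG₀S : G₀ ⊆ P.mkQ '' S := by
    rw [← map_coe, ← hG₀]; exact subset_span
  obtain ⟨G, hGS, hGfin, hG⟩ := (exists_subset_image_finite_and
    (p := fun G => span R G = S.map P.mkQ)).1 ⟨G₀, hG₀S, hG₀fin, hG₀⟩
  refine ⟨hGfin.toFinset, by simpa using hGS, fun x hx => ?_⟩
  have : x ∈ ((span R G).map P.mkQ).comap P.mkQ := by
    rw [map_span, hG]; exact mem_map_of_mem hx
  simpa [comap_map_eq] using this

theorem exists_finset_subset_sup_span_of_subset_sup {N P : Submodule R M} (F : Finset M)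
    (h : ↑F ⊆ ((N ⊔ P : Submodule R M) : Set M)) :
    ∃ F' : Finset M, ↑F' ⊆ (P : Set M) ∧ ↑F ⊆ ((N ⊔ span R ↑F' : Submodule R M) : Set M) := by
  classical
  choose! y hyN z hzP hyz using fun x (hx : x ∈ F) => mem_sup.1 (h hx)
  refine ⟨F.image z, by simpa [Set.subset_def] using hzP, fun x hx => ?_⟩
  rw [SetLike.mem_coe, ← hyz x hx]
  exact add_mem_sup (hyN x hx) (subset_span (Finset.mem_image_of_mem z hx))

theorem iSup_span_singleton_le_span_image_sup [DecidableEq M] {t : ℕ → M} {P : Submodule R M}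
    {k₀ : ℕ} (h : ∀ k ≥ k₀, t k ∈ P) :
    ⨆ k, span R {t k} ≤ span R ↑((Finset.range k₀).image t) ⊔ P := by
  refine iSup_le fun k => (span_singleton_le_iff_mem _ _).2 ?_
  by_cases hk : k < k₀
  · exact mem_sup_left (subset_span (by simpa using ⟨k, hk, rfl⟩))
  · exact mem_sup_right (h k (not_lt.1 hk))

end Submodule

namespace CompactoidRel

variable {V M : Type*} [CommRing V] {π : V} [AddCommGroup M] [Module V M] {S T : Submodule V M}

theorem exists_nullSequence [IsNoetherianRing V] (h : CompactoidRel π S T) (hST : S ≤ T) :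
    ∃ t : ℕ → M, (∀ k, t k ∈ T) ∧ (∀ n, ∃ k₀, ∀ k ≥ k₀, t k ∈ π ^ n • T) ∧
      ∀ n, S ≤ (⨆ k, span V {t k}) ⊔ π ^ n • T := by
  choose F hFS hF using fun n => (h n).elim fun F hF => exists_finset_subset_le_span_sup F hF.2
  choose R hRP hRF using fun n =>
    exists_finset_subset_sup_span_of_subset_sup (F (n + 1)) ((hFS (n + 1)).trans (hF n))
  let G : ℕ → Finset M := fun | 0 => F 0 | n + 1 => R n
  have hGT : ∀ m, ↑(G m) ⊆ (T : Set M)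
    | 0 => (hFS 0).trans hST
    | m + 1 => (hRP m).trans (smul_le_self_of_tower _ _)
  have hG (n : ℕ) : ∀ᶠ m in atTop, ↑(G m) ⊆ ((π ^ n • T : Submodule V M) : Set M) := by
    refine eventually_atTop.2 ⟨n + 1, fun m hm => ?_⟩
    obtain ⟨k, rfl⟩ := Nat.exists_eq_add_of_le hm
    rw [Nat.add_right_comm]
    exact (hRP (n + k)).trans (antitone_pow_smul π T (Nat.le_add_right n k))
  obtain ⟨t, htG, hGt, htnull⟩ :=
    exists_seq_enumerating_of_eventually_subset (fun n => zero_mem _) G hG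
  have hFt (n : ℕ) : ↑(F n) ⊆ (span V (range t) : Set M) := by
    induction n with
    | zero => exact (hGt 0).trans subset_span
    | succ n ih => exact (hRF n).trans (sup_le (span_le.2 ih) (span_mono (hGt (n + 1))))
  refine ⟨t, fun k => ?_, fun n => eventually_atTop.1 (htnull n), fun n => ?_⟩
  · rcases htG ⟨k, rfl⟩ with h0 | hk
    · exact (h0 : t k = 0) ▸ zero_mem T
    · obtain ⟨m, hm⟩ := mem_iUnion.1 hk
      exact hGT m hm
  · rw [← span_range_eq_iSup]
    exact (hF n).trans (sup_le_sup_right (span_le.2 (hFt n)) _)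

theorem of_nullSequence {t : ℕ → M} (htT : ∀ k, t k ∈ T)
    (htnull : ∀ n, ∃ k₀, ∀ k ≥ k₀, t k ∈ π ^ n • T)
    (hS : ∀ n, S ≤ (⨆ k, span V {t k}) ⊔ π ^ n • T) : CompactoidRel π S T := by
  classical
  intro n
  obtain ⟨k₀, hk₀⟩ := htnull n
  refine ⟨(Finset.range k₀).image t, by simpa [Set.subset_def] using fun k _ => htT k, ?_⟩
  exact (hS n).trans (sup_le (iSup_span_singleton_le_span_image_sup hk₀) le_sup_right)

end CompactoidRel

theorem compactoidRel_iff_exists_nullSequence_general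
    {V : Type*} [CommRing V] [IsDomain V] [IsDiscreteValuationRing V]
    (π : V)
    {M : Type*} [AddCommGroup M] [Module V M]
    (T S : Submodule V M) (hST : S ≤ T) :
    CompactoidRel π S T ↔
      ∃ t : ℕ → M, (∀ k : ℕ, t k ∈ T) ∧
        (∀ n : ℕ, ∃ k₀ : ℕ, ∀ k ≥ k₀, t k ∈ π ^ n • T) ∧
        (∀ n : ℕ, S ≤ (⨆ k : ℕ, Submodule.span V {t k}) ⊔ π ^ n • T) :=
  ⟨fun h => h.exists_nullSequence hST,
    fun ⟨_, htT, htnull, hS⟩ => .of_nullSequence htT htnull hS⟩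

/-- Proposition 3.4, (1) ⇔ (3): a submodule `S ⊆ T` of a torsionfree module over a
complete discrete valuation ring is compactoid relative to `T` if and only if there is
a `π`-adic null sequence `(t_k)` in `T` with `S ⊆ Σ_k V·t_k + πⁿ T` for all `n`. -/
theorem compactoidRel_iff_exists_nullSequence
    {V : Type*} [CommRing V] [IsDomain V] [IsDiscreteValuationRing V]
    (π : V) (hπ : Irreducible π) [IsAdicComplete (Ideal.span {π}) V]
    {M : Type*} [AddCommGroup M] [Module V M]
    (htf : Function.Injective (fun x : M => π • x))
    (T S : Submodule V M) (hST : S ≤ T) :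
    CompactoidRel π S T ↔
      ∃ t : ℕ → M, (∀ k : ℕ, t k ∈ T) ∧
        (∀ n : ℕ, ∃ k₀ : ℕ, ∀ k ≥ k₀, t k ∈ π ^ n • T) ∧
        (∀ n : ℕ, S ≤ (⨆ k : ℕ, Submodule.span V {t k}) ⊔ π ^ n • T) :=
  compactoidRel_iff_exists_nullSequence_general π T S hST
end

section
/- Let V be a complete discrete valuation ring with uniformiser π, let M be a torsionfree V-module, let T ⊆ M be a V-submodule, and let S ⊆ T be a V-submodule that is compactoid relative to T. Then there exists a π-adic null sequence (t_k)_{k∈ℕ} in T with t_k ∈ S for all k, such that every s ∈ S can be written as a π-adically convergent series s = Σ_{k=0}^∞ c_k t_k in T with coefficients c_k ∈ V. (Proposition 3.4, implication (2) ⇒ (4): compactoid submodules are generated by null sequences via convergent series.) -/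
open Pointwise

/-!
Put `Sₙ = S ∩ πⁿT`. As `V` is noetherian, the compactoid condition at level `n + 1` gives a
finite `Bₙ ⊆ Sₙ` with `Sₙ ⊆ V·Bₙ + Sₙ₊₁`. Listing `B₀, B₁, …` one after another yields a null
sequence, and every `s ∈ S` is expanded greedily: subtracting a `V`-combination of `Bₙ` from the
remainder in `Sₙ` leaves a remainder in `Sₙ₊₁`.
-/

open Filter Finset

section Flatten

variable {α : Type*} (l : ℕ → List α)

/-- Reading `l 0 ++ l 1 ++ ⋯` one entry at a time: the state is the index of the current list and
its unread part; an exhausted list costs one extra step. -/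
def flattenStep : ℕ × List α → ℕ × List α
  | (n, []) => (n + 1, l (n + 1))
  | (n, _ :: rest) => (n, rest)

def flattenState (k : ℕ) : ℕ × List α :=
  (flattenStep l)^[k] (0, l 0)

theorem fst_le_fst_flattenStep (p : ℕ × List α) : p.1 ≤ (flattenStep l p).1 := by
  rcases p with ⟨n, _ | ⟨x, rest⟩⟩ <;> simp [flattenStep]

theorem flattenStep_iterate_length_add_one (n : ℕ) (rest : List α) :
    (flattenStep l)^[rest.length + 1] (n, rest) = (n + 1, l (n + 1)) := by
  induction rest with
  | nil => rfl
  | cons x rest ih => rwa [List.length_cons, Function.iterate_succ_apply]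

theorem tendsto_flattenState_fst :
    Tendsto (fun k => (flattenState l k).1) atTop atTop := by
  have hmono : Monotone fun k => (flattenState l k).1 := monotone_nat_of_le_succ fun k => by
    simpa only [flattenState, Function.iterate_succ_apply'] using fst_le_fst_flattenStep l _
  refine tendsto_atTop_atTop_of_monotone hmono fun n => ?_
  induction n with
  | zero => exact ⟨0, Nat.zero_le _⟩
  | succ n ih =>
    obtain ⟨k, hk⟩ := ih
    refine ⟨(flattenState l k).2.length + 1 + k, ?_⟩
    rw [flattenState, Function.iterate_add_apply, ← flattenState,
      flattenStep_iterate_length_add_one]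
    omega

end Flatten

namespace Submodule

theorem pow_succ_smul_le {V M : Type*} [CommSemiring V] [AddCommMonoid M] [Module V M] (π : V)
    (T : Submodule V M) (n : ℕ) : π ^ (n + 1) • T ≤ π ^ n • T := by
  rw [pow_succ', mul_smul]
  exact smul_le_self_of_tower π _

section Ring

variable {R M : Type*} [Ring R] [AddCommGroup M] [Module R M]

theorem exists_finset_subset_le_span_sup_inf [IsNoetherianRing R] {U Z : Submodule R M}
    {F : Finset M} (hU : U ≤ span R F ⊔ Z) :
    ∃ B : Finset M, (B : Set M) ⊆ U ∧ U ≤ span R B ⊔ U ⊓ Z := by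
  classical
  have hfg : (U.map Z.mkQ).FG := by
    refine (fg_span (F.finite_toSet.image Z.mkQ)).of_le ?_
    calc U.map Z.mkQ ≤ (span R F ⊔ Z).map Z.mkQ := map_mono hU
      _ = span R (Z.mkQ '' F) := by rw [map_sup, mkQ_map_self, sup_bot_eq, map_span]
  obtain ⟨G, hG⟩ := hfg
  have hGU : (G : Set (M ⧸ Z)) ⊆ Z.mkQ '' U := by
    rw [← map_coe, ← hG]
    exact subset_span
  obtain ⟨B, hBU, rfl⟩ := Finset.subset_set_image_iff.1 hGU
  have hUB : U ≤ span R B ⊔ Z := by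
    rw [sup_comm, ← comap_map_mkQ, map_span, ← Finset.coe_image, hG]
    exact le_comap_map _ _
  refine ⟨B, hBU, ?_⟩
  calc U ≤ (span R B ⊔ Z) ⊓ U := le_inf hUB le_rfl
    _ = span R B ⊔ U ⊓ Z := by rw [sup_inf_assoc_of_le _ (span_le.2 hBU), inf_comm]

end Ring

section Semiring

variable {R M : Type*} [Semiring R] [AddCommGroup M] [Module R M]

theorem exists_forall_sum_smul_sub_mem_of_le_span_singleton_sup {N : ℕ → Submodule R M}
    {t : ℕ → M} (h : ∀ k, N k ≤ R ∙ t k ⊔ N (k + 1)) {s : M} (hs : s ∈ N 0) :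
    ∃ c : ℕ → R, ∀ m, s - ∑ k ∈ range m, c k • t k ∈ N m := by
  have hdiv : ∀ k (x : N k), ∃ a : R, ∃ y : N (k + 1), (x : M) = a • t k + y := by
    intro k x
    obtain ⟨u, hu, y, hy, hxy⟩ := mem_sup.1 (h k x.2)
    obtain ⟨a, rfl⟩ := mem_span_singleton.1 hu
    exact ⟨a, ⟨y, hy⟩, hxy.symm⟩
  choose a next hnext using hdiv
  let r : (k : ℕ) → N k := fun k => Nat.rec ⟨s, hs⟩ next k
  refine ⟨fun k => a k (r k), fun m => ?_⟩
  suffices s - ∑ k ∈ range m, a k (r k) • t k = (r m).1 by rw [this]; exact (r m).2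
  induction m with
  | zero => simp [r]
  | succ m ih =>
    rw [sum_range_succ, ← sub_sub, ih, hnext m (r m), add_sub_cancel_left]

theorem exists_generating_seq_of_le_span_sup {N : ℕ → Submodule R M} (hN : Antitone N)
    {B : ℕ → Finset M} (hBN : ∀ n, (B n : Set M) ⊆ N n)
    (hNB : ∀ n, N n ≤ span R (B n) ⊔ N (n + 1)) :
    ∃ t : ℕ → M, (∀ k, t k ∈ N 0) ∧ (∀ n, ∀ᶠ k in atTop, t k ∈ N n) ∧
      ∀ s ∈ N 0, ∃ c : ℕ → R, ∀ n, ∀ᶠ m in atTop, s - ∑ k ∈ range m, c k • t k ∈ N n := by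
  classical
  let l n := (B n).toList
  have hl : ∀ n, {x | x ∈ l n} = (B n : Set M) := fun n => by ext; simp [l]
  let p := flattenState l
  let t k := (p k).2.headD 0
  -- after `k` terms, the remainder of the greedy expansion of `s` lies in `rest (p k)`
  let rest (q : ℕ × List M) := span R {x | x ∈ q.2} ⊔ N (q.1 + 1)
  have hp : ∀ k, p (k + 1) = flattenStep l (p k) := fun k =>
    Function.iterate_succ_apply' _ _ _
  have hpN : ∀ k, ∀ x ∈ (p k).2, x ∈ N (p k).1 := by
    intro k
    induction k with
    | zero => intro x hx; exact hBN 0 (by simpa [p, l, flattenState] using hx)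
    | succ k ih =>
      rw [hp]
      rcases hq : p k with ⟨n, _ | ⟨y, ys⟩⟩ <;> rw [hq] at ih
      · intro x hx; exact hBN (n + 1) (by simpa [l, flattenStep] using hx)
      · exact fun x hx => ih x (List.mem_cons_of_mem y hx)
  have ht : ∀ k, t k ∈ N (p k).1 := by
    intro k
    rcases hq : (p k).2 with _ | ⟨y, ys⟩
    · simp [t, hq]
    · simpa [t, hq] using hpN k y (by simp [hq])
  have hrest_le : ∀ k, rest (p k) ≤ N (p k).1 :=
    fun k => sup_le (span_le.2 (hpN k)) (hN (Nat.le_succ _))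
  have hrest_step : ∀ q : ℕ × List M, rest q ≤ R ∙ q.2.headD 0 ⊔ rest (flattenStep l q) := by
    rintro ⟨n, _ | ⟨y, ys⟩⟩
    · simpa [rest, flattenStep, hl] using hNB (n + 1)
    · simp only [rest, flattenStep, List.headD_cons, List.setOfPred_mem_cons, span_insert,
        sup_assoc, le_refl]
  have hlevel : ∀ n, ∀ᶠ k in atTop, n ≤ (p k).1 :=
    tendsto_atTop.1 (tendsto_flattenState_fst l)
  refine ⟨t, fun k => hN (Nat.zero_le _) (ht k),
    fun n => (hlevel n).mono fun k hk => hN hk (ht k), fun s hs => ?_⟩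
  have hs : s ∈ rest (p 0) := by simpa [rest, p, flattenState, hl] using hNB 0 hs
  obtain ⟨c, hc⟩ := exists_forall_sum_smul_sub_mem_of_le_span_singleton_sup
    (fun k => (hp k).symm ▸ hrest_step (p k)) hs
  exact ⟨c, fun n => (hlevel n).mono fun m hm => hN hm (hrest_le m (hc m))⟩

end Semiring

end Submodule

theorem compactoidRel_exists_nullSequence_series_general
    {V : Type*} [CommRing V] [IsDomain V] [IsDiscreteValuationRing V]
    (π : V)
    {M : Type*} [AddCommGroup M] [Module V M]
    (T S : Submodule V M) (hST : S ≤ T)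
    (hS : CompactoidRel π S T) :
    ∃ t : ℕ → M, (∀ k : ℕ, t k ∈ S) ∧
      (∀ n : ℕ, ∃ k₀ : ℕ, ∀ k ≥ k₀, t k ∈ π ^ n • T) ∧
      ∀ s ∈ S, ∃ c : ℕ → V, ∀ n : ℕ, ∃ N : ℕ, ∀ m ≥ N,
        s - ∑ k ∈ Finset.range m, c k • t k ∈ π ^ n • T := by
  let P n := S ⊓ π ^ n • T
  have hP : Antitone P :=
    antitone_nat_of_succ_le fun n => inf_le_inf_left S (Submodule.pow_succ_smul_le π T n)
  have hP0 : P 0 = S := by simpa [P] using hST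
  have hPT : ∀ n, P n ≤ π ^ n • T := fun n => inf_le_right
  have hB : ∀ n, ∃ B : Finset M, (B : Set M) ⊆ P n ∧ P n ≤ Submodule.span V B ⊔ P (n + 1) := by
    intro n
    obtain ⟨F, -, hSF⟩ := hS (n + 1)
    obtain ⟨B, hBP, hPB⟩ := Submodule.exists_finset_subset_le_span_sup_inf (inf_le_left.trans hSF)
    exact ⟨B, hBP, hPB.trans (sup_le_sup_left (inf_le_inf_right _ inf_le_left) _)⟩
  choose B hBP hPB using hB
  obtain ⟨t, htS, htP, hseries⟩ := Submodule.exists_generating_seq_of_le_span_sup hP hBP hPB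
  refine ⟨t, fun k => hP0 ▸ htS k,
    fun n => eventually_atTop.1 ((htP n).mono fun k hk => hPT n hk), fun s hs => ?_⟩
  obtain ⟨c, hc⟩ := hseries s (hP0 ▸ hs)
  exact ⟨c, fun n => eventually_atTop.1 ((hc n).mono fun m hm => hPT n hm)⟩

/-- Proposition 3.4, (2) ⇒ (4): if `S ⊆ T` is compactoid relative to `T` in a
torsionfree module over a complete discrete valuation ring, then there is a `π`-adic
null sequence `(t_k)` in `T` consisting of elements of `S` such that every `s ∈ S` is
the sum of a `π`-adically convergent series `Σ_k c_k t_k` in `T` with `c_k ∈ V`. -/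
theorem compactoidRel_exists_nullSequence_series
    {V : Type*} [CommRing V] [IsDomain V] [IsDiscreteValuationRing V]
    (π : V) (hπ : Irreducible π) [IsAdicComplete (Ideal.span {π}) V]
    {M : Type*} [AddCommGroup M] [Module V M]
    (htf : Function.Injective (fun x : M => π • x))
    (T S : Submodule V M) (hST : S ≤ T)
    (hS : CompactoidRel π S T) :
    ∃ t : ℕ → M, (∀ k : ℕ, t k ∈ S) ∧
      (∀ n : ℕ, ∃ k₀ : ℕ, ∀ k ≥ k₀, t k ∈ π ^ n • T) ∧
      ∀ s ∈ S, ∃ c : ℕ → V, ∀ n : ℕ, ∃ N : ℕ, ∀ m ≥ N,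
        s - ∑ k ∈ Finset.range m, c k • t k ∈ π ^ n • T :=
  compactoidRel_exists_nullSequence_series_general π T S hST hS
end

section
/- Let V be a complete discrete valuation ring with uniformiser π, let M be a torsionfree V-module, let T ⊆ M be a V-submodule that is π-adically complete, and let S ⊆ T be a V-submodule that is compactoid relative to T. Then there exists a V-submodule T′ with S ⊆ T′ ⊆ T such that T′ is compactoid relative to T and T′ is π-adically complete. (Lemma 4.1: if the bornological V-module M is complete, then so is M equipped with the compactoid bornology; the witnessing submodule is T′ = ⋂_m (V·F_m + π^m T).) -/
open Pointwise

/-!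
Choose finite sets `Fₘ ⊆ T` with `S ⊆ V·Fₘ + πᵐT` and put `T' = ⋂ₘ (V·Fₘ + πᵐT)`; it contains `S`
and is compactoid relative to `T` by construction. Since multiplication by `πⁿ` is injective,
`πⁿT' = ⋂ₘ πⁿ(V·Fₘ + πᵐT)`, and each of these contains `πⁿT' + πⁿ⁺ᵐT`; hence every `πⁿT'` is closed
in the `π`-adic topology of `T`. A Cauchy sequence in `T'` then converges in the complete module `T`,
and closedness of the `πⁿT'` puts the limit in `T'` and makes the convergence `π`-adic in `T'`.
-/

namespace Submodule

variable {R M : Type*} [CommRing R] [AddCommGroup M] [Module R M]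

theorem smodEq_span_singleton_pow_iff {a : R} {n : ℕ} {N : Submodule R M} {x y : N} :
    x ≡ y [SMOD (Ideal.span {a} ^ n • ⊤ : Submodule R N)] ↔ (x : M) - y ∈ a ^ n • N := by
  rw [SModEq.sub_mem, mem_smul_top_iff, Ideal.span_singleton_pow, ideal_span_singleton_smul,
    AddSubgroupClass.coe_sub]

variable {T T' : Submodule R M}

theorem smodEq_inclusion {I : Ideal R} (hle : T' ≤ T) {x y : T'}
    (h : x ≡ y [SMOD (I • ⊤ : Submodule R T')]) :
    inclusion hle x ≡ inclusion hle y [SMOD (I • ⊤ : Submodule R T)] :=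
  (h.map _).mono (by rw [map_smul'']; exact smul_mono_right _ le_top)

theorem isHausdorff_of_le {I : Ideal R} (hT : IsHausdorff I T) (hle : T' ≤ T) :
    IsHausdorff I T' :=
  ⟨fun _ hx => inclusion_injective hle <|
    (hT.haus _ fun n => smodEq_inclusion hle (hx n)).trans (map_zero _).symm⟩

variable {a : R}

theorem isPrecomplete_of_le (hT : IsPrecomplete (Ideal.span {a}) T) (hle : T' ≤ T)
    (hclosed : ∀ (n : ℕ) (y : M), (∀ m, y ∈ a ^ n • T' ⊔ a ^ (n + m) • T) → y ∈ a ^ n • T') :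
    IsPrecomplete (Ideal.span {a}) T' := by
  refine ⟨fun {f} hf => ?_⟩
  have hf' : ∀ {m n : ℕ}, m ≤ n → (f n : M) - f m ∈ a ^ m • T' := fun hmn =>
    smodEq_span_singleton_pow_iff.1 (hf hmn).symm
  obtain ⟨L, hL⟩ := hT.prec fun hmn => smodEq_inclusion hle (hf hmn)
  have hlim : ∀ n, (L : M) - f n ∈ a ^ n • T' := fun n => hclosed n _ fun m => by
    have hsplit : (L : M) - f n = (f (n + m) - f n) + (L - f (n + m)) := by abel
    rw [hsplit]
    exact add_mem_sup (hf' (Nat.le_add_right n m)) (smodEq_span_singleton_pow_iff.1 (hL _).symm)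
  have hLT' : (L : M) ∈ T' := by
    have h0 := hlim 0
    rw [pow_zero, one_smul] at h0
    simpa using T'.add_mem h0 (f 0).2
  refine ⟨⟨L, hLT'⟩, fun n => smodEq_span_singleton_pow_iff.2 ?_⟩
  simpa using (a ^ n • T').neg_mem (hlim n)

theorem isAdicComplete_of_le (hT : IsAdicComplete (Ideal.span {a}) T) (hle : T' ≤ T)
    (hclosed : ∀ (n : ℕ) (y : M), (∀ m, y ∈ a ^ n • T' ⊔ a ^ (n + m) • T) → y ∈ a ^ n • T') :
    IsAdicComplete (Ideal.span {a}) T' where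
  toIsHausdorff := isHausdorff_of_le hT.toIsHausdorff hle
  toIsPrecomplete := isPrecomplete_of_le hT.toIsPrecomplete hle hclosed

theorem mem_pow_smul_iInf_of_forall_mem_sup (ha : Function.Injective (a • · : M → M))
    {P : ℕ → Submodule R M} (hP : ∀ m, a ^ m • T ≤ P m) (n : ℕ) (y : M)
    (hy : ∀ m, y ∈ a ^ n • (⨅ k, P k) ⊔ a ^ (n + m) • T) : y ∈ a ^ n • ⨅ k, P k := by
  have hinj : Function.Injective (DistribSMul.toLinearMap R M (a ^ n)) := by
    change Function.Injective (a ^ n • · : M → M)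
    rw [← smul_iterate]
    exact ha.iterate n
  rw [pointwise_smul_def, map_iInf _ hinj]
  refine mem_iInf _ |>.2 fun m => sup_le (smul_mono_right _ (iInf_le P m)) ?_ (hy m)
  rw [pow_add, mul_smul]
  exact smul_mono_right _ (hP m)

theorem isAdicComplete_iInf (ha : Function.Injective (a • · : M → M))
    (hT : IsAdicComplete (Ideal.span {a}) T) {P : ℕ → Submodule R M} (hPT : ∀ m, P m ≤ T)
    (hP : ∀ m, a ^ m • T ≤ P m) : IsAdicComplete (Ideal.span {a}) ↥(⨅ m, P m) :=
  isAdicComplete_of_le hT ((iInf_le P 0).trans (hPT 0))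
    (mem_pow_smul_iInf_of_forall_mem_sup ha hP)

end Submodule

theorem compactoidRel_exists_complete_compactoid_general
    {V : Type*} [CommRing V]
    (π : V)
    {M : Type*} [AddCommGroup M] [Module V M]
    (htf : Function.Injective (fun x : M => π • x))
    (T S : Submodule V M)
    (hT : IsAdicComplete (Ideal.span {π}) T)
    (hS : CompactoidRel π S T) :
    ∃ T' : Submodule V M, S ≤ T' ∧ T' ≤ T ∧
      CompactoidRel π T' T ∧ IsAdicComplete (Ideal.span {π}) T' := by
  choose F hFT hSF using hS
  set P : ℕ → Submodule V M := fun m => Submodule.span V (F m : Set M) ⊔ π ^ m • T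
  have hPT : ∀ m, P m ≤ T := fun m =>
    sup_le (Submodule.span_le.2 (hFT m)) (Submodule.smul_le_self_of_tower _ _)
  exact ⟨⨅ m, P m, le_iInf hSF, (iInf_le P 0).trans (hPT 0),
    fun n => ⟨F n, hFT n, iInf_le P n⟩,
    Submodule.isAdicComplete_iInf htf hT hPT fun _ => le_sup_right⟩

/-- Lemma 4.1: if `S ⊆ T` is compactoid relative to a `π`-adically complete submodule
`T` of a torsionfree module over a complete discrete valuation ring, then `S` is
contained in a submodule `T' ⊆ T` that is compactoid relative to `T` and `π`-adically
complete. -/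
theorem compactoidRel_exists_complete_compactoid
    {V : Type*} [CommRing V] [IsDomain V] [IsDiscreteValuationRing V]
    (π : V) (hπ : Irreducible π) [IsAdicComplete (Ideal.span {π}) V]
    {M : Type*} [AddCommGroup M] [Module V M]
    (htf : Function.Injective (fun x : M => π • x))
    (T S : Submodule V M) (hST : S ≤ T)
    (hT : IsAdicComplete (Ideal.span {π}) T)
    (hS : CompactoidRel π S T) :
    ∃ T' : Submodule V M, S ≤ T' ∧ T' ≤ T ∧
      CompactoidRel π T' T ∧ IsAdicComplete (Ideal.span {π}) T' :=
  compactoidRel_exists_complete_compactoid_general π htf T S hT hS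
end

section
/- Let V be a complete discrete valuation ring with uniformiser π, let M be a torsionfree V-module, and let S ⊆ T ⊆ M be V-submodules with S compactoid relative to T. Then the V-submodule π^{-1}S := {x ∈ M : πx ∈ S} is compactoid relative to π^{-1}T := {x ∈ M : πx ∈ T}. (Lemma 4.2: if M is torsionfree, then M with the compactoid bornology is again torsionfree; the proof uses that V is Noetherian, so that π^{-1}(V·F) is finitely generated for a finite set F.) -/
open Pointwise

/-!
If `πS ⊆ V·F + π^(n+1) T`, write `πx = y + π^(n+1) t`; then `x - πⁿ t` lies in `π⁻¹(V·F)`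
and `πⁿ t` in `πⁿ π⁻¹T`. Over a Noetherian ring the preimage `π⁻¹(V·F)` is finitely
generated, because multiplication by `π` embeds it into the finitely generated `V·F`.
-/

namespace Submodule

variable {R M N : Type*} [CommRing R] [AddCommGroup M] [Module R M] [AddCommGroup N] [Module R N]

theorem FG.comap_of_injective [IsNoetherianRing R] {f : M →ₗ[R] N}
    (hf : Function.Injective f) {P : Submodule R N} (hP : P.FG) : (P.comap f).FG :=
  fg_of_fg_map_injective f hf (hP.of_le (map_comap_le f P))

theorem mem_comap_lsmul_sup_of_smul_mem_sup {π : R} {N T : Submodule R M} {n : ℕ} {x : M}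
    (hx : π • x ∈ N ⊔ π ^ (n + 1) • T) :
    x ∈ N.comap (LinearMap.lsmul R M π) ⊔ π ^ n • T.comap (LinearMap.lsmul R M π) := by
  obtain ⟨y, hy, _, ⟨t, ht, rfl⟩, hxyt⟩ := mem_sup.mp hx
  have hdiff : π • (x - π ^ n • t) = y := by
    rw [smul_sub, ← hxyt, smul_smul, ← pow_succ']
    exact add_sub_cancel_right y _
  refine mem_sup.mpr ⟨x - π ^ n • t, ?_, π ^ n • t, ?_, sub_add_cancel x _⟩
  · rwa [mem_comap, LinearMap.lsmul_apply, hdiff]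
  · exact smul_mem_pointwise_smul t _ _ (T.smul_mem π ht)

end Submodule

theorem CompactoidRel.comap_lsmul {V M : Type*} [CommRing V] [IsNoetherianRing V]
    [AddCommGroup M] [Module V M] {π : V} (htf : Function.Injective (fun x : M => π • x))
    {S T : Submodule V M} (hS : CompactoidRel π S T) :
    CompactoidRel π (S.comap (LinearMap.lsmul V M π)) (T.comap (LinearMap.lsmul V M π)) := by
  intro n
  obtain ⟨F, hFT, hSF⟩ := hS (n + 1)
  obtain ⟨G, hG⟩ := (Submodule.fg_span F.finite_toSet).comap_of_injective
    (f := LinearMap.lsmul V M π) htf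
  refine ⟨G, fun g hg => ?_, fun x hx => ?_⟩
  · have hgP : g ∈ (Submodule.span V (F : Set M)).comap (LinearMap.lsmul V M π) :=
      hG ▸ Submodule.subset_span hg
    exact Submodule.span_le.mpr hFT hgP
  · rw [hG]
    exact Submodule.mem_comap_lsmul_sup_of_smul_mem_sup (hSF hx)

theorem compactoidRel_preimage_smul_general
    {V : Type*} [CommRing V] [IsDomain V] [IsDiscreteValuationRing V]
    (π : V)
    {M : Type*} [AddCommGroup M] [Module V M]
    (htf : Function.Injective (fun x : M => π • x))
    (S T : Submodule V M)
    (hS : CompactoidRel π S T) :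
    CompactoidRel π (S.comap (LinearMap.lsmul V M π)) (T.comap (LinearMap.lsmul V M π)) :=
  hS.comap_lsmul htf

/-- Lemma 4.2 (the compactoid bornology is torsionfree): if `S ⊆ T` is compactoid
relative to `T` in a torsionfree module over a complete discrete valuation ring, then
`π⁻¹S = {x ∈ M : πx ∈ S}` is compactoid relative to `π⁻¹T = {x ∈ M : πx ∈ T}`. -/
theorem compactoidRel_preimage_smul
    {V : Type*} [CommRing V] [IsDomain V] [IsDiscreteValuationRing V]
    (π : V) (hπ : Irreducible π) [IsAdicComplete (Ideal.span {π}) V]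
    {M : Type*} [AddCommGroup M] [Module V M]
    (htf : Function.Injective (fun x : M => π • x))
    (S T : Submodule V M) (hST : S ≤ T)
    (hS : CompactoidRel π S T) :
    CompactoidRel π (S.comap (LinearMap.lsmul V M π)) (T.comap (LinearMap.lsmul V M π)) :=
  compactoidRel_preimage_smul_general π htf S T hS
end

section
/- Let V be a complete discrete valuation ring with uniformiser π, let L be a V-module, and let K ⊆ L be a V-submodule such that L/K is torsionfree. Let T ⊆ L be a V-submodule and let S ⊆ T ∩ K be a V-submodule. If S is compactoid relative to T, then S is compactoid relative to T ∩ K. In particular, a V-submodule of K that is compactoid in L is already compactoid in K. (Part of Proposition 4.6: the inclusion K′ → L′ of modules with the compactoid bornology is a bornological embedding.) -/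
/-!
Given `S ⊆ span F + πⁿT` with `F ⊆ T` finite, the module `span F ∩ (K + πⁿT)` is finitely
generated because `V` is noetherian, and each of its generators can be moved into `T ∩ K` modulo
`πⁿT`. This writes every `s ∈ S` as `f' + πⁿt` with `f'` in the span of finitely many elements of
`T ∩ K` and `t ∈ T`; then `πⁿt = s - f' ∈ K`, so `t ∈ K` because `L/K` is torsionfree.
-/

open Pointwise

namespace Submodule

variable {R M : Type*} [CommRing R] [AddCommGroup M] [Module R M]

lemma mem_of_pow_smul_mem {K : Submodule R M} {a : R}
    (ha : Function.Injective (fun x : M ⧸ K => a • x)) (n : ℕ) {w : M}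
    (hw : a ^ n • w ∈ K) : w ∈ K := by
  have han : Function.Injective (fun x : M ⧸ K => a ^ n • x) := by
    simpa only [smul_iterate] using ha.iterate n
  rw [← Quotient.mk_eq_zero] at hw ⊢
  exact han (by simpa only [smul_zero, Quotient.mk_smul] using hw)

lemma inf_pow_smul_le_pow_smul_inf {K : Submodule R M} {a : R}
    (ha : Function.Injective (fun x : M ⧸ K => a • x)) (n : ℕ) (T : Submodule R M) :
    K ⊓ a ^ n • T ≤ a ^ n • (T ⊓ K) := by
  rintro _ ⟨hK, t, ht, rfl⟩
  exact smul_mem_pointwise_smul t _ _ ⟨ht, mem_of_pow_smul_mem ha n hK⟩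

lemma exists_finset_subset_le_span_sup_of_fg {N A B : Submodule R M} (hN : N.FG)
    (h : N ≤ A ⊔ B) : ∃ F : Finset M, (F : Set M) ⊆ A ∧ N ≤ span R F ⊔ B := by
  classical
  obtain ⟨G, rfl⟩ := hN
  have hdec : ∀ g ∈ G, ∃ x ∈ A, ∃ y ∈ B, x + y = g := fun g hg =>
    mem_sup.mp (h (subset_span hg))
  choose! x hxA y hyB hxy using hdec
  refine ⟨G.image x, by simpa [Set.subset_def] using hxA, span_le.mpr fun g hg => ?_⟩
  rw [← hxy g hg]
  exact add_mem (mem_sup_left (subset_span (Finset.mem_image_of_mem x hg)))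
    (mem_sup_right (hyB g hg))

end Submodule

open Submodule in
theorem compactoidRel_inf_of_torsionfree_quotient_general
    {V : Type*} [CommRing V] [IsDomain V] [IsDiscreteValuationRing V]
    (π : V)
    {L : Type*} [AddCommGroup L] [Module V L]
    (K : Submodule V L)
    (htfQ : Function.Injective (fun x : L ⧸ K => π • x))
    (T S : Submodule V L) (hS : S ≤ T ⊓ K)
    (h : CompactoidRel π S T) :
    CompactoidRel π S (T ⊓ K) := by
  intro n
  obtain ⟨F, hFT, hSF⟩ := h n
  let P := span V (F : Set L) ⊓ (K ⊔ π ^ n • T)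
  have hPfg : P.FG := (fg_span F.finite_toSet).of_le inf_le_left
  have hPT : P ≤ T ⊓ K ⊔ π ^ n • T := calc
    P ≤ T ⊓ (K ⊔ π ^ n • T) := inf_le_inf_right _ (span_le.mpr hFT)
    _ ≤ T ⊓ K ⊔ π ^ n • T := inf_sup_le_assoc_of_le _ (smul_le_self_of_tower _ _)
  obtain ⟨F', hF'TK, hPF'⟩ := exists_finset_subset_le_span_sup_of_fg hPfg hPT
  have hSK : S ≤ K := hS.trans inf_le_right
  have hSF' : S ≤ span V (F' : Set L) ⊔ π ^ n • T := calc
    S ≤ (π ^ n • T ⊔ span V (F : Set L)) ⊓ (K ⊔ π ^ n • T) :=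
      le_inf (hSF.trans_eq (sup_comm _ _)) (hSK.trans le_sup_left)
    _ ≤ π ^ n • T ⊔ P := sup_inf_le_assoc_of_le _ le_sup_right
    _ ≤ span V (F' : Set L) ⊔ π ^ n • T := sup_le le_sup_right hPF'
  refine ⟨F', hF'TK, ?_⟩
  calc S ≤ K ⊓ (π ^ n • T ⊔ span V (F' : Set L)) := le_inf hSK (hSF'.trans_eq (sup_comm _ _))
    _ ≤ K ⊓ π ^ n • T ⊔ span V (F' : Set L) :=
      inf_sup_le_assoc_of_le _ (span_le.mpr fun x hx => (hF'TK hx).2)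
    _ ≤ span V (F' : Set L) ⊔ π ^ n • (T ⊓ K) :=
      (sup_le_sup_right (inf_pow_smul_le_pow_smul_inf htfQ n T) _).trans_eq (sup_comm _ _)

/-- Part of Proposition 4.6 (`K' → L'` is a bornological embedding): if `K ⊆ L` has
torsionfree quotient `L/K`, `T ⊆ L` is a submodule, and `S ⊆ T ∩ K` is compactoid
relative to `T`, then `S` is compactoid relative to `T ∩ K`. -/
theorem compactoidRel_inf_of_torsionfree_quotient
    {V : Type*} [CommRing V] [IsDomain V] [IsDiscreteValuationRing V]
    (π : V) (hπ : Irreducible π) [IsAdicComplete (Ideal.span {π}) V]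
    {L : Type*} [AddCommGroup L] [Module V L]
    (K : Submodule V L)
    (htfQ : Function.Injective (fun x : L ⧸ K => π • x))
    (T S : Submodule V L) (hS : S ≤ T ⊓ K)
    (h : CompactoidRel π S T) :
    CompactoidRel π S (T ⊓ K) :=
  compactoidRel_inf_of_torsionfree_quotient_general π K htfQ T S hS h
end

section
/- Let V be a complete discrete valuation ring with uniformiser π, let L be a V-module, and let K ⊆ L be a V-submodule such that L/K is torsionfree. Then L/π^n L is a finitely generated V-module for every n ∈ ℕ if and only if both K/π^n K and (L/K)/π^n (L/K) are finitely generated V-modules for every n ∈ ℕ. (This is the two-out-of-three property of nuclearity in Proposition 4.6, in the Banach-module formulation: a Banach V-module M is nuclear precisely when M/π^n M is finitely generated for all n.) -/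
open Pointwise Function

/-!
Reduction modulo `r` is right exact, so `K/rK → L/rL → (L/K)/r(L/K) → 0` is exact; when `r` is a
non-zero-divisor on `L/K` the first map is also injective, since `rL ∩ K = rK`. Over a noetherian
ring the middle term of a short exact sequence is finitely generated exactly when the outer two are.
-/

section

variable {R : Type*} [CommRing R]

theorem Module.finite_iff_finite_and_finite_of_shortExact [IsNoetherianRing R]
    {M N P : Type*} [AddCommGroup M] [Module R M] [AddCommGroup N] [Module R N]
    [AddCommGroup P] [Module R P] {f : M →ₗ[R] N} {g : N →ₗ[R] P}
    (hf : Function.Injective f) (hfg : Exact f g) (hg : Surjective g) :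
    Module.Finite R N ↔ Module.Finite R M ∧ Module.Finite R P :=
  ⟨fun _ ↦ ⟨.of_injective f hf, .of_surjective g hg⟩, fun ⟨_, _⟩ ↦ .of_exact hfg hg⟩

namespace QuotSMulTop

variable {L : Type*} [AddCommGroup L] [Module R L] {r : R} {K : Submodule R L}

theorem map_subtype_injective (h : IsSMulRegular (L ⧸ K) r) :
    Injective (map r K.subtype) := by
  have hK : Exact (0 : Unit →ₗ[R] K) K.subtype :=
    (LinearMap.exact_zero_iff_injective _ _).mpr K.injective_subtype
  have := map_first_exact_on_four_term_exact_of_isSMulRegular_last hK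
    (LinearMap.exact_subtype_mkQ K) h
  rwa [map_zero, LinearMap.exact_zero_iff_injective] at this

theorem finite_iff_finite_submodule_and_finite_quotient [IsNoetherianRing R]
    (h : IsSMulRegular (L ⧸ K) r) :
    Module.Finite R (QuotSMulTop r L) ↔
      Module.Finite R (QuotSMulTop r K) ∧ Module.Finite R (QuotSMulTop r (L ⧸ K)) :=
  Module.finite_iff_finite_and_finite_of_shortExact (map_subtype_injective h)
    (map_exact r (LinearMap.exact_subtype_mkQ K) K.mkQ_surjective)
    (map_surjective r K.mkQ_surjective)

end QuotSMulTop

end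

theorem finite_mod_pow_iff_of_torsionfree_quotient_general
    {V : Type*} [CommRing V] [IsDomain V] [IsDiscreteValuationRing V]
    (π : V)
    {L : Type*} [AddCommGroup L] [Module V L]
    (K : Submodule V L)
    (htfQ : Function.Injective (fun x : L ⧸ K => π • x)) :
    (∀ n : ℕ, Module.Finite V (L ⧸ (π ^ n • ⊤ : Submodule V L))) ↔
      ((∀ n : ℕ, Module.Finite V (K ⧸ (π ^ n • ⊤ : Submodule V K))) ∧
        (∀ n : ℕ, Module.Finite V ((L ⧸ K) ⧸ (π ^ n • ⊤ : Submodule V (L ⧸ K))))) := by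
  have hreg : IsSMulRegular (L ⧸ K) π := htfQ
  rw [← forall_and]
  exact forall_congr' fun n ↦
    QuotSMulTop.finite_iff_finite_submodule_and_finite_quotient (hreg.pow n)

/-- The two-out-of-three property of nuclearity in Proposition 4.6, in the
Banach-module formulation: if `K ⊆ L` is a submodule with torsionfree quotient `L/K`,
then `L/πⁿL` is finitely generated for all `n` if and only if both `K/πⁿK` and
`(L/K)/πⁿ(L/K)` are finitely generated for all `n`. -/
theorem finite_mod_pow_iff_of_torsionfree_quotient
    {V : Type*} [CommRing V] [IsDomain V] [IsDiscreteValuationRing V]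
    (π : V) (hπ : Irreducible π) [IsAdicComplete (Ideal.span {π}) V]
    {L : Type*} [AddCommGroup L] [Module V L]
    (K : Submodule V L)
    (htfQ : Function.Injective (fun x : L ⧸ K => π • x)) :
    (∀ n : ℕ, Module.Finite V (L ⧸ (π ^ n • ⊤ : Submodule V L))) ↔
      ((∀ n : ℕ, Module.Finite V (K ⧸ (π ^ n • ⊤ : Submodule V K))) ∧
        (∀ n : ℕ, Module.Finite V ((L ⧸ K) ⧸ (π ^ n • ⊤ : Submodule V (L ⧸ K))))) :=
  finite_mod_pow_iff_of_torsionfree_quotient_general π K htfQ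
end
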